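/- Let l ≥ 3, let P = v_1 v_2 v_3 be a path, let C = u_1 u_2 ... u_l u_1 be a cycle vertex-disjoint from P with starting vertex u_1, and let K be the graph obtained from the disjoint union of P and C by adding the edge u_2 v_2. Then every 6-L(2,1)-labeling f of P can be extended to a 6-L(2,1)-labeling f_1 of K such that the restriction of f_1 to C is a cycle-extendable 6-L(2,1)-labeling of C of type 2. -/
import Mathlib


/-- An L(2,1)-labeling of a simple graph: adjacent vertices get labels differing by
at least 2, and vertices at distance exactly 2 get distinct labels. -/
def IsL21Labeling {V : Type*} (G : SimpleGraph V) (f : V → ℕ) : Prop :=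
  (∀ a b : V, G.Adj a b → 2 ≤ ((f a : ℤ) - (f b : ℤ)).natAbs) ∧
  (∀ a b : V, G.dist a b = 2 → f a ≠ f b)

/-- A k-L(2,1)-labeling: an L(2,1)-labeling with all labels in {0, 1, ..., k}. -/
def IsKL21Labeling {V : Type*} (G : SimpleGraph V) (k : ℕ) (f : V → ℕ) : Prop :=
  IsL21Labeling G f ∧ ∀ a : V, f a ≤ k

/-- The λ-number of a graph: the least k such that G admits a k-L(2,1)-labeling. -/
noncomputable def lambdaNumber {V : Type*} (G : SimpleGraph V) : ℕ :=
  sInf {k : ℕ | ∃ f : V → ℕ, IsKL21Labeling G k f}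

/-- The cycle graph on `Fin l`; vertex `j` is the paper's u_{j+1}. -/
def CycleGraph (l : ℕ) : SimpleGraph (Fin l) :=
  SimpleGraph.fromRel (fun p q => ((p : ℕ) + 1) % l = (q : ℕ))

/-- Vertex type of members of 𝓚(C): the cycle vertices plus, for each attachment
position `i`, up to two new internal path vertices `(i, false)`, `(i, true)`. -/
abbrev CVert (l : ℕ) := Fin l ⊕ (ℕ × Bool)

/-- A valid attachment specification for 𝓚(C): attachments at pairs
(u_{i+1}, u_{i+2 mod l}) for positions 0 ≤ i ≤ l-1 (position i is the paper's index i+1),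
`some false`/`some true` meaning an attached path of length 2/3, and no two chosen
positions are consecutive (the paper's i_{j+1} ≥ i_j + 2). -/
def ValidK (l : ℕ) (D : ℕ → Option Bool) : Prop :=
  (∀ i, (D i).isSome → i < l) ∧ (∀ i, ¬ ((D i).isSome ∧ (D (i + 1)).isSome))

/-- A valid attachment specification for 𝓕(C): as for 𝓚(C), but additionally the
paper's i_1 ≥ 2 and i_t < l, i.e. positions 0 and l-1 are unused. -/
def ValidF (l : ℕ) (D : ℕ → Option Bool) : Prop :=
  ValidK l D ∧ D 0 = none ∧ D (l - 1) = none

/-- The edge relation (up to symmetrization) of the member of 𝓚(C) described by `D`. -/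
def cattachRel (l : ℕ) (D : ℕ → Option Bool) : CVert l → CVert l → Prop
  | Sum.inl p, Sum.inl q => ((p : ℕ) + 1) % l = (q : ℕ)
  | Sum.inl p, Sum.inr (i, k) =>
      ((p : ℕ) = i ∧ k = false) ∨
      ((p : ℕ) = (i + 1) % l ∧ ((D i = some false ∧ k = false) ∨ (D i = some true ∧ k = true)))
  | Sum.inr (i, k), Sum.inr (j, m) => i = j ∧ D i = some true ∧ k = false ∧ m = true
  | _, _ => False

def CAttachG (l : ℕ) (D : ℕ → Option Bool) : SimpleGraph (CVert l) :=
  SimpleGraph.fromRel (cattachRel l D)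

/-- The vertices actually present in the member of 𝓚(C) described by `D`. -/
def CActive {l : ℕ} (D : ℕ → Option Bool) : CVert l → Prop
  | Sum.inl _ => True
  | Sum.inr (i, k) => (D i).isSome ∧ (k = false ∨ D i = some true)

/-- `f` extends to a 6-L(2,1)-labeling of the member of 𝓚(C) described by `D`. -/
def CExtendsTo (l : ℕ) (D : ℕ → Option Bool) (f : Fin l → ℕ) : Prop :=
  ∃ g : ↥{w : CVert l | CActive D w} → ℕ,
    IsKL21Labeling ((CAttachG l D).induce {w : CVert l | CActive D w}) 6 g ∧
    ∀ p : Fin l, g ⟨Sum.inl p, trivial⟩ = f p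

/-- A cycle-extendable 6-L(2,1)-labeling of type 1: a 6-L(2,1)-labeling of C that
extends to a 6-L(2,1)-labeling of every H ∈ 𝓚(C). -/
def CycleExtendable1 (l : ℕ) (f : Fin l → ℕ) : Prop :=
  IsKL21Labeling (CycleGraph l) 6 f ∧ ∀ D : ℕ → Option Bool, ValidK l D → CExtendsTo l D f

/-- A cycle-extendable 6-L(2,1)-labeling of type 2: a 6-L(2,1)-labeling of C that
extends to a 6-L(2,1)-labeling of every H ∈ 𝓕(C). -/
def CycleExtendable2 (l : ℕ) (f : Fin l → ℕ) : Prop :=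
  IsKL21Labeling (CycleGraph l) 6 f ∧ ∀ D : ℕ → Option Bool, ValidF l D → CExtendsTo l D f

/-- The path graph on `Fin n`, with edges between consecutive indices. -/
def PathGraph (n : ℕ) : SimpleGraph (Fin n) :=
  SimpleGraph.fromRel (fun p q => (p : ℕ) + 1 = (q : ℕ))

/-- The graph K : the cycle u_1 ... u_l (vertex `Sum.inl j` is u_{j+1}) disjoint from
the path v_1 v_2 v_3 (vertex `Sum.inr j` is v_{j+1}), plus the bridge u_2 v_2. -/
abbrev KVert (l : ℕ) := Fin l ⊕ Fin 3

def kRel (l : ℕ) : KVert l → KVert l → Prop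
  | Sum.inl p, Sum.inl q => ((p : ℕ) + 1) % l = (q : ℕ)
  | Sum.inr p, Sum.inr q => (p : ℕ) + 1 = (q : ℕ)
  | Sum.inl p, Sum.inr q => (p : ℕ) = 1 ∧ (q : ℕ) = 1
  | _, _ => False

def KGraph (l : ℕ) : SimpleGraph (KVert l) := SimpleGraph.fromRel (kRel l)


def gap (a b : ℕ) : Prop := a + 2 ≤ b ∨ b + 2 ≤ a

instance : DecidablePred (fun p : ℕ × ℕ => gap p.1 p.2) := fun _ => by unfold gap; infer_instance
instance (a b : ℕ) : Decidable (gap a b) := by unfold gap; infer_instance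

def Bfun (b1 b2 b3 s : ℕ) : ℕ := if s % 3 = 0 then b1 else if s % 3 = 1 then b2 else b3

def feasA (a b p q : ℕ) : Prop := ∃ x, x < 7 ∧ gap x a ∧ gap x b ∧ x ≠ p ∧ x ≠ q

def feasB (a b p q : ℕ) : Prop :=
  ∃ u, u < 7 ∧ ∃ v, v < 7 ∧ gap u a ∧ gap v b ∧ gap u v ∧ u ≠ p ∧ u ≠ b ∧ v ≠ a ∧ v ≠ q

def FF (a b p q : ℕ) : Prop := feasA a b p q ∧ feasB a b p q

instance (a b p q : ℕ) : Decidable (feasA a b p q) := by unfold feasA; infer_instance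
instance (a b p q : ℕ) : Decidable (feasB a b p q) := by unfold feasB; infer_instance
instance (a b p q : ℕ) : Decidable (FF a b p q) := by unfold FF; infer_instance

def CondsP (r y z c0 b1 b2 b3 c1 : ℕ) : Prop :=
  y ≤ 6 ∧ c0 ≤ 6 ∧ b1 ≤ 6 ∧ b2 ≤ 6 ∧ b3 ≤ 6 ∧ c1 ≤ 6 ∧
  gap c0 y ∧ gap y b1 ∧ gap b1 b2 ∧ gap b2 b3 ∧ gap b3 b1 ∧
  gap (Bfun b1 b2 b3 (r+2)) c1 ∧ gap c1 c0 ∧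
  c0 ≠ b1 ∧ y ≠ b2 ∧ Bfun b1 b2 b3 (r+1) ≠ c1 ∧ Bfun b1 b2 b3 (r+2) ≠ c0 ∧ c1 ≠ y ∧
  c0 ≠ z ∧ b1 ≠ z ∧
  FF y b1 c0 b2 ∧ FF b1 b2 y b3 ∧
  FF b1 b2 b3 b3 ∧ FF b2 b3 b1 b1 ∧ FF b3 b1 b2 b2 ∧
  FF (Bfun b1 b2 b3 (r+1)) (Bfun b1 b2 b3 (r+2)) (Bfun b1 b2 b3 r) c1 ∧
  FF (Bfun b1 b2 b3 (r+2)) c1 (Bfun b1 b2 b3 (r+1)) c0 ∧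
  (r = 0 → gap y c1 ∧ c0 ≠ c1 ∧ c1 ≠ z ∧ FF y c1 c0 c0) ∧
  (r = 1 → y ≠ c1 ∧ FF y b1 c0 c1 ∧ FF b1 c1 y c0) ∧
  (r = 2 → FF b1 b2 y c1)

instance (r y z c0 b1 b2 b3 c1 : ℕ) : Decidable (CondsP r y z c0 b1 b2 b3 c1) := by
  unfold CondsP; infer_instance

def tbl (r y z : ℕ) : ℕ × ℕ × ℕ × ℕ × ℕ :=
  match r, y, z with
  | 0, 0, 2 => (3,4,2,0,6)
  | 0, 0, 3 => (2,4,2,0,4)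
  | 0, 0, 4 => (2,3,5,0,6)
  | 0, 0, 5 => (2,3,5,0,4)
  | 0, 0, 6 => (2,3,5,0,4)
  | 0, 1, 3 => (4,6,0,3,6)
  | 0, 1, 4 => (3,6,0,2,6)
  | 0, 1, 5 => (3,4,0,2,6)
  | 0, 1, 6 => (5,3,0,6,3)
  | 0, 2, 0 => (4,6,1,3,6)
  | 0, 2, 4 => (0,6,0,2,6)
  | 0, 2, 5 => (0,4,0,2,4)
  | 0, 2, 6 => (0,4,0,2,4)
  | 0, 3, 0 => (1,6,1,3,6)
  | 0, 3, 1 => (0,5,0,3,5)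
  | 0, 3, 5 => (0,6,0,2,6)
  | 0, 3, 6 => (0,1,6,3,5)
  | 0, 4, 0 => (1,6,0,2,6)
  | 0, 4, 1 => (0,2,0,4,2)
  | 0, 4, 2 => (0,6,0,2,6)
  | 0, 4, 6 => (0,1,3,6,2)
  | 0, 5, 0 => (1,2,4,0,3)
  | 0, 5, 1 => (0,3,0,5,3)
  | 0, 5, 2 => (0,3,0,5,3)
  | 0, 5, 3 => (2,0,2,4,0)
  | 0, 6, 0 => (1,2,0,6,4)
  | 0, 6, 1 => (0,2,0,4,2)
  | 0, 6, 2 => (0,1,3,6,4)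
  | 0, 6, 3 => (0,1,3,6,2)
  | 0, 6, 4 => (0,1,3,6,2)
  | 1, 0, 2 => (3,4,2,0,1)
  | 1, 0, 3 => (2,6,1,3,4)
  | 1, 0, 4 => (2,3,5,0,5)
  | 1, 0, 5 => (2,3,5,0,5)
  | 1, 0, 6 => (2,3,5,0,5)
  | 1, 1, 3 => (4,5,0,3,0)
  | 1, 1, 4 => (3,6,0,2,0)
  | 1, 1, 5 => (3,4,0,2,0)
  | 1, 1, 6 => (3,4,0,2,0)
  | 1, 2, 0 => (4,5,3,0,1)
  | 1, 2, 4 => (0,6,0,2,3)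
  | 1, 2, 5 => (0,6,0,2,3)
  | 1, 2, 6 => (4,0,3,5,6)
  | 1, 3, 0 => (1,6,1,3,4)
  | 1, 3, 1 => (0,6,0,3,2)
  | 1, 3, 5 => (0,1,6,3,6)
  | 1, 3, 6 => (0,1,6,3,6)
  | 1, 4, 0 => (1,2,0,4,5)
  | 1, 4, 1 => (0,6,0,2,3)
  | 1, 4, 2 => (0,1,3,6,5)
  | 1, 4, 6 => (0,1,3,6,5)
  | 1, 5, 0 => (1,2,4,0,4)
  | 1, 5, 1 => (0,3,0,5,6)
  | 1, 5, 2 => (0,1,6,3,4)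
  | 1, 5, 3 => (0,1,6,3,4)
  | 1, 6, 0 => (1,2,0,4,5)
  | 1, 6, 1 => (0,3,0,6,5)
  | 1, 6, 2 => (0,1,3,6,3)
  | 1, 6, 3 => (0,1,3,6,3)
  | 1, 6, 4 => (0,1,3,6,3)
  | 2, 0, 2 => (3,4,2,0,5)
  | 2, 0, 3 => (2,6,1,3,5)
  | 2, 0, 4 => (2,3,1,6,6)
  | 2, 0, 5 => (2,3,1,6,6)
  | 2, 0, 6 => (2,3,1,6,6)
  | 2, 1, 3 => (4,5,0,3,6)
  | 2, 1, 4 => (3,6,0,2,5)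
  | 2, 1, 5 => (3,4,0,2,5)
  | 2, 1, 6 => (3,4,0,2,5)
  | 2, 2, 0 => (4,5,3,0,0)
  | 2, 2, 4 => (0,6,1,3,3)
  | 2, 2, 5 => (0,6,1,3,3)
  | 2, 2, 6 => (4,0,3,6,6)
  | 2, 3, 0 => (1,6,2,0,5)
  | 2, 3, 1 => (5,0,4,2,1)
  | 2, 3, 5 => (0,1,6,3,2)
  | 2, 3, 6 => (0,1,6,3,2)
  | 2, 4, 0 => (1,2,0,4,3)
  | 2, 4, 1 => (0,6,3,0,5)
  | 2, 4, 2 => (0,6,3,0,5)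
  | 2, 4, 6 => (1,0,2,4,6)
  | 2, 5, 0 => (1,2,4,6,6)
  | 2, 5, 1 => (0,3,6,0,2)
  | 2, 5, 2 => (0,1,6,3,2)
  | 2, 5, 3 => (0,1,6,3,2)
  | 2, 6, 0 => (1,2,0,4,3)
  | 2, 6, 1 => (2,3,0,6,4)
  | 2, 6, 2 => (1,0,2,4,4)
  | 2, 6, 3 => (1,0,2,4,4)
  | 2, 6, 4 => (1,0,2,4,4)
  | _, _, _ => (0,0,0,0,0)

set_option maxRecDepth 10000 in
lemma master : ∀ r < 3, ∀ y < 7, ∀ z < 7, gap y z →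
    CondsP r y z (tbl r y z).1 (tbl r y z).2.1 (tbl r y z).2.2.1 (tbl r y z).2.2.2.1
      (tbl r y z).2.2.2.2 := by decide

lemma gap_comm {a b : ℕ} (h : gap a b) : gap b a := by unfold gap at *; omega
lemma gap_ne {a b : ℕ} (h : gap a b) : a ≠ b := by unfold gap at h; omega

lemma Bcong {b1 b2 b3 : ℕ} {s t : ℕ} (h : s % 3 = t % 3) :
    Bfun b1 b2 b3 s = Bfun b1 b2 b3 t := by unfold Bfun; rw [h]

lemma B_cases (b1 b2 b3 s : ℕ) :
    (Bfun b1 b2 b3 s = b1 ∧ Bfun b1 b2 b3 (s+1) = b2 ∧ Bfun b1 b2 b3 (s+2) = b3) ∨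
    (Bfun b1 b2 b3 s = b2 ∧ Bfun b1 b2 b3 (s+1) = b3 ∧ Bfun b1 b2 b3 (s+2) = b1) ∨
    (Bfun b1 b2 b3 s = b3 ∧ Bfun b1 b2 b3 (s+1) = b1 ∧ Bfun b1 b2 b3 (s+2) = b2) := by
  have h : s % 3 = 0 ∨ s % 3 = 1 ∨ s % 3 = 2 := by omega
  have e1 : (s+1) % 3 = (s % 3 + 1) % 3 := by omega
  have e2 : (s+2) % 3 = (s % 3 + 2) % 3 := by omega
  unfold Bfun
  rcases h with h | h | h <;> rw [e1, e2, h] <;> norm_num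

def gf (l c0 y b1 b2 b3 c1 i : ℕ) : ℕ :=
  if i = 0 then c0 else if i = 1 then y else if i = l - 1 then c1 else Bfun b1 b2 b3 (i - 2)

section Core

variable {l c0 y b1 b2 b3 c1 z : ℕ}

lemma gf_0 : gf l c0 y b1 b2 b3 c1 0 = c0 := by simp [gf]

lemma gf_1 (hl : 3 ≤ l) : gf l c0 y b1 b2 b3 c1 1 = y := by
  unfold gf; rw [if_neg (by omega), if_pos rfl]

lemma gf_last (hl : 3 ≤ l) : gf l c0 y b1 b2 b3 c1 (l-1) = c1 := by
  unfold gf; rw [if_neg (by omega), if_neg (by omega), if_pos rfl]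

lemma gf_mid (hl : 3 ≤ l) {i : ℕ} (h2 : 2 ≤ i) (h : i ≤ l - 2) :
    gf l c0 y b1 b2 b3 c1 i = Bfun b1 b2 b3 (i-2) := by
  unfold gf; rw [if_neg (by omega), if_neg (by omega), if_neg (by omega)]

lemma gf_bound (hl : 3 ≤ l)
    (hC : CondsP (l % 3) y z c0 b1 b2 b3 c1) (i : ℕ) :
    gf l c0 y b1 b2 b3 c1 i ≤ 6 := by
  obtain ⟨hy, h0, h1, h2, h3, h4, -⟩ := hC
  unfold gf Bfun; split_ifs <;> omega

lemma L1 (hl : 3 ≤ l) (hC : CondsP (l % 3) y z c0 b1 b2 b3 c1) :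
    ∀ i, i < l → gap (gf l c0 y b1 b2 b3 c1 i) (gf l c0 y b1 b2 b3 c1 ((i+1) % l)) := by
  obtain ⟨hyy, hb0, hb1, hb2, hb3, hb4, E0, E1, Eg0, Eg1, Eg2, EL2, EL, D0, D1, Dl3, Dl2, Dla,
    Z0, Z1, F1, F2g, Fg0, Fg1, Fg2, Fl3, Fl2, H0, H1, H2⟩ := hC
  intro i hi
  rcases Nat.lt_or_ge (i+1) l with h | h
  · rw [Nat.mod_eq_of_lt h]
    by_cases h0 : i = 0
    · subst h0; rw [gf_0, gf_1 hl]; exact E0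
    by_cases h1 : i = 1
    · subst h1
      by_cases h3 : l = 3
      · subst h3; norm_num [gf]; exact (H0 (by norm_num)).1
      · rw [gf_1 hl, gf_mid hl (by omega) (by omega)]
        simpa [Bfun] using E1
    · -- i ≥ 2
      by_cases h2 : i = l - 2
      · rw [gf_mid hl (by omega) (by omega), show i + 1 = l - 1 by omega, gf_last hl,
          Bcong (show (i-2) % 3 = (l % 3 + 2) % 3 by omega)]
        exact EL2
      · rw [gf_mid hl (by omega) (by omega), gf_mid hl (by omega) (by omega),
          show i + 1 - 2 = (i - 2) + 1 by omega]
        rcases B_cases b1 b2 b3 (i-2) with ⟨e1, e2, e3⟩ | ⟨e1, e2, e3⟩ | ⟨e1, e2, e3⟩ <;>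
          rw [e1, e2] <;> assumption
  · have hil : i = l - 1 := by omega
    have : (i+1) % l = 0 := by rw [show i + 1 = l by omega, Nat.mod_self]
    rw [this, hil, gf_last hl, gf_0]
    exact EL

lemma L2 (hl : 3 ≤ l) (hC : CondsP (l % 3) y z c0 b1 b2 b3 c1) :
    ∀ i, i < l → gf l c0 y b1 b2 b3 c1 i ≠ gf l c0 y b1 b2 b3 c1 ((i+2) % l) := by
  obtain ⟨hyy, hb0, hb1, hb2, hb3, hb4, E0, E1, Eg0, Eg1, Eg2, EL2, EL, D0, D1, Dl3, Dl2, Dla,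
    Z0, Z1, F1, F2g, Fg0, Fg1, Fg2, Fl3, Fl2, H0, H1, H2⟩ := hC
  intro i hi
  by_cases h0 : i = 0
  · subst h0
    by_cases h3 : l = 3
    · subst h3; norm_num [gf]; exact (H0 (by norm_num)).2.1
    · rw [gf_0, Nat.mod_eq_of_lt (by omega), gf_mid hl (by omega) (by omega)]
      simpa [Bfun] using D0
  by_cases h1 : i = 1
  · subst h1
    by_cases h3 : l = 3
    · subst h3; norm_num [gf]; exact (gap_ne E0).symm
    by_cases h4 : l = 4
    · subst h4; norm_num [gf]; exact (H1 (by norm_num)).1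
    · rw [gf_1 hl, Nat.mod_eq_of_lt (by omega), gf_mid hl (by omega) (by omega)]
      simpa [Bfun] using D1
  by_cases hL1 : i = l - 1
  · subst hL1
    rw [gf_last hl, show (l - 1 + 2) % l = 1 by
        rw [show l - 1 + 2 = l + 1 by omega, Nat.add_mod_left, Nat.mod_eq_of_lt (by omega)],
      gf_1 hl]
    exact Dla
  by_cases hL2 : i = l - 2
  · subst hL2
    rw [gf_mid hl (by omega) (by omega), show (l - 2 + 2) % l = 0 by
        rw [show l - 2 + 2 = l by omega, Nat.mod_self], gf_0,
      Bcong (show (l - 2 - 2) % 3 = (l % 3 + 2) % 3 by omega)]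
    exact Dl2
  by_cases hL3 : i = l - 3
  · subst hL3
    rw [gf_mid hl (by omega) (by omega), Nat.mod_eq_of_lt (by omega),
      show l - 3 + 2 = l - 1 by omega, gf_last hl,
      Bcong (show (l - 3 - 2) % 3 = (l % 3 + 1) % 3 by omega)]
    exact Dl3
  · rw [gf_mid hl (by omega) (by omega), Nat.mod_eq_of_lt (by omega),
      gf_mid hl (by omega) (by omega), show i + 2 - 2 = (i - 2) + 2 by omega]
    rcases B_cases b1 b2 b3 (i-2) with ⟨e1, e2, e3⟩ | ⟨e1, e2, e3⟩ | ⟨e1, e2, e3⟩ <;>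
      rw [e1, e3]
    · exact (gap_ne Eg2).symm
    · exact (gap_ne Eg0).symm
    · exact (gap_ne Eg1).symm

lemma LF (hl : 3 ≤ l) (hC : CondsP (l % 3) y z c0 b1 b2 b3 c1) :
    ∀ i, 1 ≤ i → i + 2 ≤ l →
      FF (gf l c0 y b1 b2 b3 c1 i) (gf l c0 y b1 b2 b3 c1 (i+1))
        (gf l c0 y b1 b2 b3 c1 (i-1)) (gf l c0 y b1 b2 b3 c1 ((i+2) % l)) := by
  obtain ⟨hyy, hb0, hb1, hb2, hb3, hb4, E0, E1, Eg0, Eg1, Eg2, EL2, EL, D0, D1, Dl3, Dl2, Dla,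
    Z0, Z1, F1, F2g, Fg0, Fg1, Fg2, Fl3, Fl2, H0, H1, H2⟩ := hC
  intro i h1 h2
  by_cases hi1 : i = 1
  · subst hi1
    by_cases h3 : l = 3
    · subst h3; norm_num [gf]; exact (H0 (by norm_num)).2.2.2
    by_cases h4 : l = 4
    · subst h4; norm_num [gf, Bfun]; exact (H1 (by norm_num)).2.1
    · rw [gf_1 hl, gf_0, gf_mid hl (by omega) (by omega), Nat.mod_eq_of_lt (by omega),
        gf_mid hl (by omega) (by omega)]
      simpa [Bfun] using F1
  by_cases hi2 : i = 2
  · subst hi2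
    by_cases h4 : l = 4
    · subst h4; norm_num [gf, Bfun]; exact (H1 (by norm_num)).2.2
    by_cases h5 : l = 5
    · subst h5; norm_num [gf, Bfun]; exact H2 (by norm_num)
    · rw [gf_mid hl (by omega) (by omega), gf_1 hl, gf_mid hl (by omega) (by omega),
        Nat.mod_eq_of_lt (by omega), gf_mid hl (by omega) (by omega)]
      simpa [Bfun] using F2g
  -- now i ≥ 3
  by_cases hL2 : i = l - 2
  · subst hL2
    rw [gf_mid hl (by omega) (by omega), show l - 2 + 1 = l - 1 by omega, gf_last hl,
      gf_mid hl (by omega) (by omega), show (l - 2 + 2) % l = 0 by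
        rw [show l - 2 + 2 = l by omega, Nat.mod_self], gf_0,
      Bcong (show (l - 2 - 2) % 3 = (l % 3 + 2) % 3 by omega),
      Bcong (show (l - 2 - 1 - 2) % 3 = (l % 3 + 1) % 3 by omega)]
    exact Fl2
  by_cases hL3 : i = l - 3
  · subst hL3
    rw [gf_mid hl (by omega) (by omega), show l - 3 + 1 = l - 2 by omega,
      gf_mid hl (by omega) (by omega), gf_mid hl (by omega) (by omega),
      Nat.mod_eq_of_lt (by omega), show l - 3 + 2 = l - 1 by omega, gf_last hl,
      Bcong (show (l - 3 - 2) % 3 = (l % 3 + 1) % 3 by omega),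
      Bcong (show (l - 2 - 2) % 3 = (l % 3 + 2) % 3 by omega),
      Bcong (show (l - 3 - 1 - 2) % 3 = (l % 3) % 3 by omega)]
    exact Fl3
  · rw [gf_mid hl (by omega) (by omega), gf_mid hl (by omega) (by omega),
      gf_mid hl (by omega) (by omega), Nat.mod_eq_of_lt (by omega),
      gf_mid hl (by omega) (by omega),
      show i + 1 - 2 = (i-2) + 1 by omega,
      Bcong (show (i - 1 - 2) % 3 = ((i-2) + 2) % 3 by omega),
      show i + 2 - 2 = (i-2) + 2 by omega]
    rcases B_cases b1 b2 b3 (i-2) with ⟨e1, e2, e3⟩ | ⟨e1, e2, e3⟩ | ⟨e1, e2, e3⟩ <;>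
      rw [e1, e2, e3] <;> assumption

end Core

section Glue

lemma isKL21_of {V : Type*} {G : SimpleGraph V} {f : V → ℕ} {k : ℕ}
    (hb : ∀ a, f a ≤ k)
    (h1 : ∀ a b, G.Adj a b → gap (f a) (f b))
    (h2 : ∀ a b c : V, G.Adj a c → G.Adj c b → a ≠ b → f a ≠ f b) :
    IsKL21Labeling G k f := by
  refine ⟨⟨fun a b h => ?_, fun a b hd => ?_⟩, hb⟩
  · have := h1 a b h; unfold gap at this; omega
  · have hne : a ≠ b := by
      rintro rfl; rw [SimpleGraph.dist_self] at hd; omega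
    obtain ⟨p, hp⟩ := SimpleGraph.exists_walk_of_dist_ne_zero
      (show G.dist a b ≠ 0 by omega)
    rw [hd] at hp
    cases p with
    | nil => simp at hp
    | cons h q =>
      cases q with
      | nil => simp at hp
      | cons h' q' =>
        cases q' with
        | nil => exact h2 a b _ h h' hne
        | cons h'' q'' => simp [SimpleGraph.Walk.length_cons] at hp

variable {l c0 y b1 b2 b3 c1 z : ℕ}

lemma succ_mod_cases {a : ℕ} (hl : 3 ≤ l) (ha : a < l) (b : ℕ) (h : (a+1) % l = b) :
    (a + 1 = l ∧ b = 0) ∨ (a + 1 < l ∧ b = a + 1) := by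
  rcases Nat.lt_or_ge (a+1) l with h' | h'
  · right; exact ⟨h', by rw [← h, Nat.mod_eq_of_lt h']⟩
  · left
    have he : a + 1 = l := by omega
    exact ⟨he, by rw [← h, he, Nat.mod_self]⟩

lemma two_step {a c b : ℕ} (hl : 3 ≤ l) (ha : a < l) (hc : c < l)
    (h1 : (a+1) % l = c) (h2 : (c+1) % l = b) : b = (a+2) % l := by
  rcases succ_mod_cases hl ha c h1 with ⟨e1, e2⟩ | ⟨e1, e2⟩ <;>
    rcases succ_mod_cases hl hc b h2 with ⟨e3, e4⟩ | ⟨e3, e4⟩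
  · omega
  · subst e2; rw [e4, show a + 2 = l + 1 by omega, Nat.add_mod_left, Nat.mod_eq_of_lt (by omega)]
  · rw [e4, show a + 2 = l by omega, Nat.mod_self]
  · rw [e4, e2, Nat.mod_eq_of_lt (by omega)]

lemma same_succ {a b : ℕ} (hl : 3 ≤ l) (ha : a < l) (hb : b < l)
    (h : (a+1) % l = (b+1) % l) : a = b := by
  rcases succ_mod_cases hl ha ((b+1) % l) h with ⟨e1, e2⟩ | ⟨e1, e2⟩ <;>
    rcases succ_mod_cases hl hb ((b+1) % l) rfl with ⟨e3, e4⟩ | ⟨e3, e4⟩ <;> omega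

lemma cyc_gap (hl : 3 ≤ l) (hC : CondsP (l % 3) y z c0 b1 b2 b3 c1)
    {a b : ℕ} (ha : a < l) (hb : b < l)
    (h : (a+1) % l = b ∨ (b+1) % l = a) :
    gap (gf l c0 y b1 b2 b3 c1 a) (gf l c0 y b1 b2 b3 c1 b) := by
  rcases h with h | h
  · rw [← h]; exact L1 hl hC a ha
  · rw [← h]; exact gap_comm (L1 hl hC b hb)

lemma cyc_dist_ne (hl : 3 ≤ l) (hC : CondsP (l % 3) y z c0 b1 b2 b3 c1)
    {a c b : ℕ} (ha : a < l) (hc : c < l) (hb : b < l)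
    (h1 : (a+1) % l = c ∨ (c+1) % l = a) (h2 : (c+1) % l = b ∨ (b+1) % l = c)
    (hne : a ≠ b) :
    gf l c0 y b1 b2 b3 c1 a ≠ gf l c0 y b1 b2 b3 c1 b := by
  rcases h1 with h1 | h1 <;> rcases h2 with h2 | h2
  · rw [two_step hl ha hc h1 h2]; exact L2 hl hC a ha
  · exact absurd (same_succ hl ha hb (h1.trans h2.symm)) hne
  · exact absurd (h1.symm.trans h2) hne
  · rw [two_step hl hb hc h2 h1]; exact (L2 hl hC b hb).symm

end Glue

section Ext

variable {l c0 y b1 b2 b3 c1 z : ℕ}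

lemma extension (hl : 3 ≤ l) (hC : CondsP (l % 3) y z c0 b1 b2 b3 c1)
    (D : ℕ → Option Bool) (hD : ValidF l D) :
    CExtendsTo l D (fun p : Fin l => gf l c0 y b1 b2 b3 c1 (p : ℕ)) := by
  obtain ⟨⟨hDlt, hDcons⟩, hD0, hDl1⟩ := hD
  set gl : ℕ → ℕ := gf l c0 y b1 b2 b3 c1 with hgl
  have hpos : ∀ i, (D i).isSome → 1 ≤ i ∧ i + 2 ≤ l := by
    intro i hi
    have hlt := hDlt i hi
    have h0 : i ≠ 0 := by rintro rfl; rw [hD0] at hi; simp at hi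
    have h1 : i ≠ l - 1 := by intro h; rw [h, hDl1] at hi; simp at hi
    omega
  have hmod : ∀ i, (D i).isSome → (i+1) % l = i + 1 := fun i hi =>
    Nat.mod_eq_of_lt (by have := hpos i hi; omega)
  have hXex : ∀ i, ∃ x, (D i).isSome →
      x < 7 ∧ gap x (gl i) ∧ gap x (gl (i+1)) ∧ x ≠ gl (i-1) ∧ x ≠ gl ((i+2) % l) := by
    intro i
    by_cases hi : (D i).isSome
    · obtain ⟨h1, h2⟩ := hpos i hi
      obtain ⟨x, hx⟩ := (LF hl hC i h1 h2).1
      exact ⟨x, fun _ => hx⟩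
    · exact ⟨0, fun h => absurd h hi⟩
  choose X hX using hXex
  have hWex : ∀ i, ∃ w : ℕ × ℕ, (D i).isSome →
      w.1 < 7 ∧ w.2 < 7 ∧ gap w.1 (gl i) ∧ gap w.2 (gl (i+1)) ∧ gap w.1 w.2 ∧
      w.1 ≠ gl (i-1) ∧ w.1 ≠ gl (i+1) ∧ w.2 ≠ gl i ∧ w.2 ≠ gl ((i+2) % l) := by
    intro i
    by_cases hi : (D i).isSome
    · obtain ⟨h1, h2⟩ := hpos i hi
      obtain ⟨u, hu7, v, hv7, h3, h4, h5, h6, h7, h8, h9⟩ := (LF hl hC i h1 h2).2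
      exact ⟨(u, v), fun _ => ⟨hu7, hv7, h3, h4, h5, h6, h7, h8, h9⟩⟩
    · exact ⟨(0,0), fun h => absurd h hi⟩
  choose W hW using hWex
  set GE : CVert l → ℕ := Sum.elim (fun p : Fin l => gl (p : ℕ))
      (fun ik : ℕ × Bool => if ik.2 = true then (W ik.1).2
        else if D ik.1 = some true then (W ik.1).1 else X ik.1) with hGE
  have hGEinl : ∀ p : Fin l, GE (Sum.inl p) = gl (p : ℕ) := fun p => rfl
  have hGEf : ∀ i, D i = some false → GE (Sum.inr (i, false)) = X i := by
    intro i h; simp [hGE, h]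
  have hGEt0 : ∀ i, D i = some true → GE (Sum.inr (i, false)) = (W i).1 := by
    intro i h; simp [hGE, h]
  have hGEt1 : ∀ i, GE (Sum.inr (i, true)) = (W i).2 := fun i => by simp [hGE]
  -- neighbor characterizations
  have charInr : ∀ (u : CVert l) (i : ℕ) (k : Bool), (D i).isSome →
      (CAttachG l D).Adj u (Sum.inr (i,k)) →
      (∃ p : Fin l, u = Sum.inl p ∧
        (((p:ℕ) = i ∧ k = false) ∨
         ((p:ℕ) = i + 1 ∧ (D i = some false ∧ k = false ∨ D i = some true ∧ k = true)))) ∨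
      (D i = some true ∧ ((k = true ∧ u = Sum.inr (i, false)) ∨
        (k = false ∧ u = Sum.inr (i, true)))) := by
    intro u i k hi hadj
    rw [CAttachG, SimpleGraph.fromRel_adj] at hadj
    obtain ⟨hne, h | h⟩ := hadj
    · cases u with
      | inl p =>
        left
        refine ⟨p, rfl, ?_⟩
        simp only [cattachRel] at h
        rcases h with ⟨h1, h2⟩ | ⟨h1, h2⟩
        · exact Or.inl ⟨h1, h2⟩
        · right; rw [hmod i hi] at h1; exact ⟨h1, h2⟩
      | inr jm =>
        obtain ⟨j, m⟩ := jm
        simp only [cattachRel] at h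
        obtain ⟨rfl, hT, rfl, rfl⟩ := h
        exact Or.inr ⟨hT, Or.inl ⟨rfl, rfl⟩⟩
    · cases u with
      | inl p => exact absurd h (by simp [cattachRel])
      | inr jm =>
        obtain ⟨j, m⟩ := jm
        simp only [cattachRel] at h
        obtain ⟨rfl, hT, rfl, rfl⟩ := h
        exact Or.inr ⟨hT, Or.inr ⟨rfl, rfl⟩⟩
  have charInl : ∀ (u : CVert l) (t : Fin l), CActive D u →
      (CAttachG l D).Adj u (Sum.inl t) →
      (∃ p : Fin l, u = Sum.inl p ∧
        ((((p:ℕ)+1) % l = (t:ℕ)) ∨ (((t:ℕ)+1) % l = (p:ℕ)))) ∨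
      (∃ i k, u = Sum.inr (i,k) ∧ (D i).isSome ∧
        (((t:ℕ) = i ∧ k = false) ∨
         ((t:ℕ) = i + 1 ∧ (D i = some false ∧ k = false ∨ D i = some true ∧ k = true)))) := by
    intro u t hu hadj
    rw [CAttachG, SimpleGraph.fromRel_adj] at hadj
    obtain ⟨hne, h | h⟩ := hadj
    · cases u with
      | inl p =>
        simp only [cattachRel] at h
        exact Or.inl ⟨p, rfl, Or.inl h⟩
      | inr jm =>
        obtain ⟨j, m⟩ := jm
        exact absurd h (by simp [cattachRel])
    · cases u with
      | inl p =>
        simp only [cattachRel] at h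
        exact Or.inl ⟨p, rfl, Or.inr h⟩
      | inr jm =>
        obtain ⟨j, m⟩ := jm
        have hjS : (D j).isSome := hu.1
        right
        refine ⟨j, m, rfl, hjS, ?_⟩
        simp only [cattachRel] at h
        rcases h with ⟨h1, h2⟩ | ⟨h1, h2⟩
        · exact Or.inl ⟨h1, h2⟩
        · right; rw [hmod j hjS] at h1; exact ⟨h1, h2⟩
  -- gap property on edges
  have adjGap : ∀ u v : CVert l, CActive D u → CActive D v →
      (CAttachG l D).Adj u v → gap (GE u) (GE v) := by
    intro u v hu hv hadj
    cases v with
    | inl q =>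
      rcases charInl u q hu hadj with ⟨p, rfl, hp⟩ | ⟨i, k, rfl, hiS, hcase⟩
      · exact cyc_gap hl hC p.isLt q.isLt hp
      · rcases hcase with ⟨hq, rfl⟩ | ⟨hq, hDk⟩
        · rcases hDi : D i with _ | b
          · rw [hDi] at hiS; simp at hiS
          cases b
          · rw [hGEf i hDi, hGEinl, hq]; exact (hX i hiS).2.1
          · rw [hGEt0 i hDi, hGEinl, hq]; exact (hW i hiS).2.2.1
        · rcases hDk with ⟨hDi, rfl⟩ | ⟨hDi, rfl⟩
          · rw [hGEf i hDi, hGEinl, hq]; exact (hX i hiS).2.2.1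
          · rw [hGEt1 i, hGEinl, hq]; exact (hW i hiS).2.2.2.1
    | inr ik =>
      obtain ⟨i, k⟩ := ik
      have hiS : (D i).isSome := hv.1
      rcases charInr u i k hiS hadj with ⟨p, rfl, hp⟩ | ⟨hDi, hcase⟩
      · rcases hp with ⟨hq, rfl⟩ | ⟨hq, hDk⟩
        · rcases hDi : D i with _ | b
          · rw [hDi] at hiS; simp at hiS
          cases b
          · rw [hGEf i hDi, hGEinl, hq]; exact gap_comm (hX i hiS).2.1
          · rw [hGEt0 i hDi, hGEinl, hq]; exact gap_comm (hW i hiS).2.2.1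
        · rcases hDk with ⟨hDi, rfl⟩ | ⟨hDi, rfl⟩
          · rw [hGEf i hDi, hGEinl, hq]; exact gap_comm (hX i hiS).2.2.1
          · rw [hGEt1 i, hGEinl, hq]; exact gap_comm (hW i hiS).2.2.2.1
      · rcases hcase with ⟨rfl, rfl⟩ | ⟨rfl, rfl⟩
        · rw [hGEt1 i, hGEt0 i hDi]; exact (hW i hiS).2.2.2.2.1
        · rw [hGEt1 i, hGEt0 i hDi]; exact gap_comm (hW i hiS).2.2.2.2.1
  -- distance-two property
  have nbrNe : ∀ u v w : CVert l, CActive D u → CActive D v → CActive D w →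
      (CAttachG l D).Adj u w → (CAttachG l D).Adj v w → u ≠ v → GE u ≠ GE v := by
    intro u v w hu hv hw h1 h2 hne
    cases w with
    | inl t =>
      have mix : ∀ (p : Fin l) (j : ℕ) (m : Bool), (D j).isSome →
          ((((p:ℕ)+1) % l = (t:ℕ)) ∨ (((t:ℕ)+1) % l = (p:ℕ))) →
          (((t:ℕ) = j ∧ m = false) ∨
            ((t:ℕ) = j + 1 ∧ (D j = some false ∧ m = false ∨ D j = some true ∧ m = true))) →
          gl (p:ℕ) ≠ GE (Sum.inr (j, m)) := by
        intro p j m hjS hp hcase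
        have hjb := hpos j hjS
        rcases hcase with ⟨ht, rfl⟩ | ⟨ht, hDk⟩
        · -- t = j, m = false
          rcases hp with hp | hp
          · -- (p+1) % l = j  →  p = j - 1
            have hpj : (p:ℕ) = j - 1 := by
              rcases succ_mod_cases hl p.isLt _ hp with ⟨e1, e2⟩ | ⟨e1, e2⟩ <;> omega
            rcases hDj : D j with _ | b
            · rw [hDj] at hjS; simp at hjS
            cases b
            · rw [hGEf j hDj, hpj]; exact (hX j hjS).2.2.2.1.symm
            · rw [hGEt0 j hDj, hpj]; exact (hW j hjS).2.2.2.2.2.1.symm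
          · -- p = (j+1) % l = j+1
            have hpj : (p:ℕ) = j + 1 := by rw [← hp, ht, hmod j hjS]
            rcases hDj : D j with _ | b
            · rw [hDj] at hjS; simp at hjS
            cases b
            · rw [hGEf j hDj, hpj]; exact (gap_ne (hX j hjS).2.2.1).symm
            · rw [hGEt0 j hDj, hpj]; exact (hW j hjS).2.2.2.2.2.2.1.symm
        · -- t = j + 1
          rcases hp with hp | hp
          · -- (p+1) % l = j+1 → p = j
            have hpj : (p:ℕ) = j := by
              rw [ht] at hp
              rcases succ_mod_cases hl p.isLt _ hp with ⟨e1, e2⟩ | ⟨e1, e2⟩ <;> omega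
            rcases hDk with ⟨hDj, rfl⟩ | ⟨hDj, rfl⟩
            · rw [hGEf j hDj, hpj]; exact (gap_ne (hX j hjS).2.1).symm
            · rw [hGEt1 j, hpj]; exact (hW j hjS).2.2.2.2.2.2.2.1.symm
          · -- p = (t+1) % l = (j+2) % l
            have hpj : (p:ℕ) = (j+2) % l := by rw [← hp, ht]
            rcases hDk with ⟨hDj, rfl⟩ | ⟨hDj, rfl⟩
            · rw [hGEf j hDj, hpj]; exact (hX j hjS).2.2.2.2.symm
            · rw [hGEt1 j, hpj]; exact (hW j hjS).2.2.2.2.2.2.2.2.symm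
      rcases charInl u t hu h1 with ⟨p, rfl, hp⟩ | ⟨i, k, rfl, hiS, hcase⟩ <;>
        rcases charInl v t hv h2 with ⟨q, rfl, hq⟩ | ⟨j, m, rfl, hjS, hcase2⟩
      · refine cyc_dist_ne hl hC p.isLt t.isLt q.isLt hp (hq.symm) ?_
        intro hpq; exact hne (by rw [Fin.ext hpq])
      · exact mix p j m hjS hp hcase2
      · exact (mix q i k hiS hq hcase).symm
      · -- both inr: contradictions
        exfalso
        have hib := hpos i hiS
        have hjb := hpos j hjS
        rcases hcase with ⟨ht1, hk1⟩ | ⟨ht1, hDk1⟩ <;>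
          rcases hcase2 with ⟨ht2, hk2⟩ | ⟨ht2, hDk2⟩
        · subst hk1; subst hk2
          exact hne (by rw [show i = j by omega])
        · exact hDcons j ⟨hjS, by rw [show j + 1 = i by omega]; exact hiS⟩
        · exact hDcons i ⟨hiS, by rw [show i + 1 = j by omega]; exact hjS⟩
        · have hij : i = j := by omega
          subst hij
          rcases hDk1 with ⟨hDi, rfl⟩ | ⟨hDi, rfl⟩ <;>
            rcases hDk2 with ⟨hDj, rfl⟩ | ⟨hDj, rfl⟩
          · exact hne rfl
          · rw [hDi] at hDj; simp at hDj
          · rw [hDi] at hDj; simp at hDj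
          · exact hne rfl
    | inr ik =>
      obtain ⟨i, k⟩ := ik
      have hiS : (D i).isSome := hw.1
      have hib := hpos i hiS
      rcases charInr u i k hiS h1 with ⟨p, rfl, hp⟩ | ⟨hDi1, hcase⟩ <;>
        rcases charInr v i k hiS h2 with ⟨q, rfl, hq⟩ | ⟨hDi2, hcase2⟩
      · -- both inl
        rcases hp with ⟨hp1, hk1⟩ | ⟨hp1, hDk1⟩ <;> rcases hq with ⟨hq1, hk2⟩ | ⟨hq1, hDk2⟩
        · exact absurd (by rw [Fin.ext (hp1.trans hq1.symm)] : Sum.inl p = (Sum.inl q : CVert l)) hne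
        · -- p = i, q = i+1: need D-match for q : gl i ≠ gl (i+1)
          rw [hGEinl, hGEinl, hp1, hq1]
          have := L1 hl hC i (by omega)
          rw [hmod i hiS] at this
          exact gap_ne this
        · rw [hGEinl, hGEinl, hp1, hq1]
          have := L1 hl hC i (by omega)
          rw [hmod i hiS] at this
          exact (gap_ne this).symm
        · exact absurd (by rw [Fin.ext (hp1.trans hq1.symm)] : Sum.inl p = (Sum.inl q : CVert l)) hne
      · -- u = inl p, v = inr (i, !k)-ish
        rcases hcase2 with ⟨rfl, rfl⟩ | ⟨rfl, rfl⟩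
        · -- k = true, v = inr (i,false) : u adj (i,true): p = i+1
          rcases hp with ⟨hp1, hk1⟩ | ⟨hp1, hDk1⟩
          · exact absurd hk1 (by simp)
          · rw [hGEinl, hGEt0 i hDi2, hp1]
            exact (hW i hiS).2.2.2.2.2.2.1.symm
        · -- k = false, v = inr (i,true) : u adj (i,false): p = i (or p = i+1 with D i = some false)
          rcases hp with ⟨hp1, hk1⟩ | ⟨hp1, hDk1⟩
          · rw [hGEinl, hGEt1 i, hp1]
            exact (hW i hiS).2.2.2.2.2.2.2.1.symm
          · rcases hDk1 with ⟨hDf, -⟩ | ⟨hDt, hcontra⟩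
            · rw [hDf] at hDi2; simp at hDi2
            · exact absurd hcontra (by simp)
      · -- symmetric
        rcases hcase with ⟨rfl, rfl⟩ | ⟨rfl, rfl⟩
        · rcases hq with ⟨hq1, hk1⟩ | ⟨hq1, hDk1⟩
          · exact absurd hk1 (by simp)
          · rw [hGEinl, hGEt0 i hDi1, hq1]
            exact (hW i hiS).2.2.2.2.2.2.1
        · rcases hq with ⟨hq1, hk1⟩ | ⟨hq1, hDk1⟩
          · rw [hGEinl, hGEt1 i, hq1]
            exact (hW i hiS).2.2.2.2.2.2.2.1
          · rcases hDk1 with ⟨hDf, -⟩ | ⟨hDt, hcontra⟩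
            · rw [hDf] at hDi1; simp at hDi1
            · exact absurd hcontra (by simp)
      · -- both inr: u = v contradiction
        exfalso
        rcases hcase with ⟨rfl, rfl⟩ | ⟨rfl, rfl⟩ <;>
          rcases hcase2 with ⟨h', rfl⟩ | ⟨h', rfl⟩
        · exact hne rfl
        · simp at h'
        · simp at h'
        · exact hne rfl
  -- assemble
  refine ⟨fun w => GE w.1, isKL21_of ?_ ?_ ?_, fun p => rfl⟩
  · -- bounds
    rintro ⟨w, hw⟩
    rw [Set.mem_setOf_eq] at hw
    cases w with
    | inl p => exact gf_bound hl hC (p : ℕ)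
    | inr ik =>
      obtain ⟨i, k⟩ := ik
      have hiS : (D i).isSome := hw.1
      cases k
      · rcases hDi : D i with _ | b
        · rw [hDi] at hiS; simp at hiS
        cases b
        · rw [hGEf i hDi]; have := (hX i hiS).1; omega
        · rw [hGEt0 i hDi]; have := (hW i hiS).1; omega
      · rw [hGEt1 i]; have := (hW i hiS).2.1; omega
  · rintro ⟨a, ha⟩ ⟨b, hb⟩ hadj
    rw [Set.mem_setOf_eq] at ha hb
    exact adjGap a b ha hb hadj
  · rintro ⟨a, ha⟩ ⟨b, hb⟩ ⟨c, hc⟩ h1 h2 hne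
    rw [Set.mem_setOf_eq] at ha hb hc
    exact nbrNe a b c ha hb hc h1 (h2.symm) (fun h => hne (Subtype.ext h))

end Ext

section Final

variable {l c0 y b1 b2 b3 c1 : ℕ}

lemma exists_y : ∀ (f0 f1 f2 : Fin 7),
    ∃ y : Fin 7, gap y.val f1.val ∧ y.val ≠ f0.val ∧ y.val ≠ f2.val := by decide

lemma cycLab {z : ℕ} (hl : 3 ≤ l) (hC : CondsP (l % 3) y z c0 b1 b2 b3 c1) :
    IsKL21Labeling (CycleGraph l) 6 (fun p : Fin l => gf l c0 y b1 b2 b3 c1 (p:ℕ)) := by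
  apply isKL21_of
  · intro p; exact gf_bound hl hC _
  · intro a b hadj
    rw [CycleGraph, SimpleGraph.fromRel_adj] at hadj
    exact cyc_gap hl hC a.isLt b.isLt hadj.2
  · intro a b cc h1 h2 hne
    rw [CycleGraph, SimpleGraph.fromRel_adj] at h1 h2
    exact cyc_dist_ne hl hC a.isLt cc.isLt b.isLt h1.2 h2.2
      (fun h => hne (Fin.ext h))

lemma kLab (hl : 3 ≤ l) (f : Fin 3 → ℕ)
    (hC : CondsP (l % 3) y (f 1) c0 b1 b2 b3 c1)
    (hb : ∀ j, f j ≤ 6)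
    (h01 : gap (f 0) (f 1)) (h12 : gap (f 1) (f 2)) (h02 : f 0 ≠ f 2)
    (hy1 : gap y (f 1)) (hy0 : y ≠ f 0) (hy2 : y ≠ f 2) :
    IsKL21Labeling (KGraph l) 6
      (Sum.elim (fun p : Fin l => gf l c0 y b1 b2 b3 c1 (p:ℕ)) f) := by
  have e0 : ∀ v : Fin 3, (v:ℕ) = 0 → v = 0 := fun v h => Fin.ext h
  have e1 : ∀ v : Fin 3, (v:ℕ) = 1 → v = 1 := fun v h => Fin.ext h
  have e2 : ∀ v : Fin 3, (v:ℕ) = 2 → v = 2 := fun v h => Fin.ext h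
  have hZ0 : c0 ≠ f 1 := by
    obtain ⟨-, -, -, -, -, -, -, -, -, -, -, -, -, -, -, -, -, -, hZ, -⟩ := hC
    exact hZ
  have hZ2 : gf l c0 y b1 b2 b3 c1 2 ≠ f 1 := by
    by_cases h3 : l = 3
    · have he : gf l c0 y b1 b2 b3 c1 2 = c1 := by
        unfold gf; rw [if_neg (by omega), if_neg (by omega), if_pos (by omega)]
      rw [he]
      obtain ⟨-, -, -, -, -, -, -, -, -, -, -, -, -, -, -, -, -, -, -, -, -, -, -, -, -, -, -,
        H0, -⟩ := hC
      exact ((H0 (by omega)).2.2.1)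
    · rw [gf_mid hl (by omega) (by omega)]
      obtain ⟨-, -, -, -, -, -, -, -, -, -, -, -, -, -, -, -, -, -, -, hZ1, -⟩ := hC
      simpa [Bfun] using hZ1
  apply isKL21_of
  · rintro (p | j)
    · exact gf_bound hl hC _
    · exact hb j
  · intro a b hadj
    rw [KGraph, SimpleGraph.fromRel_adj] at hadj
    obtain ⟨hne, h⟩ := hadj
    cases a with
    | inl p =>
      cases b with
      | inl q =>
        simp only [kRel] at h
        exact cyc_gap hl hC p.isLt q.isLt h
      | inr q =>
        simp only [kRel, or_false] at h
        obtain ⟨hp, hq⟩ := h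
        simp only [Sum.elim_inl, Sum.elim_inr]
        rw [show f q = f 1 from congrArg f (e1 q hq), hp, gf_1 hl]
        exact hy1
    | inr p =>
      cases b with
      | inl q =>
        simp only [kRel, false_or] at h
        obtain ⟨hq, hp⟩ := h
        simp only [Sum.elim_inl, Sum.elim_inr]
        rw [show f p = f 1 from congrArg f (e1 p hp), hq, gf_1 hl]
        exact gap_comm hy1
      | inr q =>
        simp only [kRel] at h
        have hp3 := p.isLt; have hq3 := q.isLt
        simp only [Sum.elim_inr]
        rcases h with h | h
        · have hc : ((p:ℕ) = 0 ∧ (q:ℕ) = 1) ∨ ((p:ℕ) = 1 ∧ (q:ℕ) = 2) := by omega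
          rcases hc with ⟨ha, hb'⟩ | ⟨ha, hb'⟩
          · rw [show f p = f 0 from congrArg f (e0 p ha),
              show f q = f 1 from congrArg f (e1 q hb')]; exact h01
          · rw [show f p = f 1 from congrArg f (e1 p ha),
              show f q = f 2 from congrArg f (e2 q hb')]; exact h12
        · have hc : ((q:ℕ) = 0 ∧ (p:ℕ) = 1) ∨ ((q:ℕ) = 1 ∧ (p:ℕ) = 2) := by omega
          rcases hc with ⟨ha, hb'⟩ | ⟨ha, hb'⟩
          · rw [show f q = f 0 from congrArg f (e0 q ha),
              show f p = f 1 from congrArg f (e1 p hb')]; exact gap_comm h01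
          · rw [show f q = f 1 from congrArg f (e1 q ha),
              show f p = f 2 from congrArg f (e2 p hb')]; exact gap_comm h12
  · intro a b cc h1 h2 hne
    rw [KGraph, SimpleGraph.fromRel_adj] at h1 h2
    obtain ⟨hne1, h1⟩ := h1
    obtain ⟨hne2, h2⟩ := h2
    cases cc with
    | inl t =>
      have mixK : ∀ p : Fin l, (((p:ℕ)+1) % l = (t:ℕ) ∨ ((t:ℕ)+1) % l = (p:ℕ)) →
          (t:ℕ) = 1 → gf l c0 y b1 b2 b3 c1 (p:ℕ) ≠ f 1 := by
        intro p hp ht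
        rcases hp with hp | hp
        · rw [ht] at hp
          have : (p:ℕ) = 0 := by
            rcases succ_mod_cases hl p.isLt _ hp with ⟨d1, d2⟩ | ⟨d1, d2⟩ <;> omega
          rw [this, gf_0]; exact hZ0
        · rw [ht] at hp
          have : (p:ℕ) = 2 := by rw [← hp, Nat.mod_eq_of_lt (by omega)]
          rw [this]; exact hZ2
      cases a with
      | inl p =>
        cases b with
        | inl q =>
          simp only [kRel] at h1 h2
          exact cyc_dist_ne hl hC p.isLt t.isLt q.isLt h1 h2
            (fun h => hne (congrArg _ (Fin.ext h)))
        | inr v =>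
          simp only [kRel, false_or, or_false] at h1 h2
          obtain ⟨ht, hv⟩ := h2
          simp only [Sum.elim_inl, Sum.elim_inr]
          rw [show f v = f 1 from congrArg f (e1 v hv)]
          exact mixK p h1 ht
      | inr u =>
        cases b with
        | inl q =>
          simp only [kRel, false_or, or_false] at h1 h2
          obtain ⟨ht, hu⟩ := h1
          simp only [Sum.elim_inl, Sum.elim_inr]
          rw [show f u = f 1 from congrArg f (e1 u hu)]
          exact (mixK q h2.symm ht).symm
        | inr v =>
          simp only [kRel, false_or, or_false] at h1 h2
          obtain ⟨ht, hu⟩ := h1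
          obtain ⟨ht2, hv⟩ := h2
          exact absurd (congrArg (Sum.inr (α := Fin l)) (Fin.ext (by omega))) hne
    | inr t =>
      cases a with
      | inl p =>
        cases b with
        | inl q =>
          simp only [kRel, false_or, or_false] at h1 h2
          exact absurd (congrArg (Sum.inl (β := Fin 3))
            (Fin.ext (show (p:ℕ) = (q:ℕ) by
              have := h1.1; have := h2.1; omega))) hne
        | inr v =>
          simp only [kRel, false_or, or_false] at h1 h2
          obtain ⟨hp, ht⟩ := h1
          have hv3 := v.isLt; have ht3 := t.isLt
          simp only [Sum.elim_inl, Sum.elim_inr]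
          rw [hp, gf_1 hl]
          have hc : (v:ℕ) = 0 ∨ (v:ℕ) = 2 := by rcases h2 with h2 | h2 <;> omega
          rcases hc with hc | hc
          · rw [show f v = f 0 from congrArg f (e0 v hc)]; exact hy0
          · rw [show f v = f 2 from congrArg f (e2 v hc)]; exact hy2
      | inr u =>
        cases b with
        | inl q =>
          simp only [kRel, false_or, or_false] at h1 h2
          obtain ⟨hq, ht⟩ := h2
          have hu3 := u.isLt; have ht3 := t.isLt
          simp only [Sum.elim_inl, Sum.elim_inr]
          rw [hq, gf_1 hl]
          have hc : (u:ℕ) = 0 ∨ (u:ℕ) = 2 := by rcases h1 with h1 | h1 <;> omega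
          rcases hc with hc | hc
          · rw [show f u = f 0 from congrArg f (e0 u hc)]; exact hy0.symm
          · rw [show f u = f 2 from congrArg f (e2 u hc)]; exact hy2.symm
        | inr v =>
          simp only [kRel] at h1 h2
          have hu3 := u.isLt; have hv3 := v.isLt; have ht3 := t.isLt
          have hnuv : (u:ℕ) ≠ (v:ℕ) := fun h => hne (congrArg _ (Fin.ext h))
          simp only [Sum.elim_inr]
          have hc : ((u:ℕ) = 0 ∧ (v:ℕ) = 2) ∨ ((u:ℕ) = 2 ∧ (v:ℕ) = 0) := by
            rcases h1 with h1 | h1 <;> rcases h2 with h2 | h2 <;> omega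
          rcases hc with ⟨ha, hb'⟩ | ⟨ha, hb'⟩
          · rw [show f u = f 0 from congrArg f (e0 u ha),
              show f v = f 2 from congrArg f (e2 v hb')]; exact h02
          · rw [show f u = f 2 from congrArg f (e2 u ha),
              show f v = f 0 from congrArg f (e0 v hb')]; exact h02.symm

end Final

theorem stmt19 (l : ℕ) (hl : 3 ≤ l) (f : Fin 3 → ℕ)
    (hf : IsKL21Labeling (PathGraph 3) 6 f) :
    ∃ f1 : KVert l → ℕ,
      IsKL21Labeling (KGraph l) 6 f1 ∧
      (∀ j : Fin 3, f1 (Sum.inr j) = f j) ∧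
      CycleExtendable2 l (fun p : Fin l => f1 (Sum.inl p)) := by
  obtain ⟨⟨hadjP, hdistP⟩, hbP⟩ := hf
  have adj01 : (PathGraph 3).Adj 0 1 := by
    rw [PathGraph, SimpleGraph.fromRel_adj]
    exact ⟨by decide, Or.inl (by decide)⟩
  have adj12 : (PathGraph 3).Adj 1 2 := by
    rw [PathGraph, SimpleGraph.fromRel_adj]
    exact ⟨by decide, Or.inl (by decide)⟩
  have h01g : gap (f 0) (f 1) := by
    have := hadjP 0 1 adj01; unfold gap; omega
  have h12g : gap (f 1) (f 2) := by
    have := hadjP 1 2 adj12; unfold gap; omega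
  have hdist : (PathGraph 3).dist 0 2 = 2 := by
    have hle : (PathGraph 3).dist 0 2 ≤ 2 := by
      have := SimpleGraph.dist_le (SimpleGraph.Walk.cons adj01
        (SimpleGraph.Walk.cons adj12 SimpleGraph.Walk.nil))
      simpa [SimpleGraph.Walk.length_cons, SimpleGraph.Walk.length_nil] using this
    have hne1 : (PathGraph 3).dist 0 2 ≠ 1 := by
      intro h
      have := SimpleGraph.dist_eq_one_iff_adj.mp h
      rw [PathGraph, SimpleGraph.fromRel_adj] at this
      revert this; decide
    have hne0 : (PathGraph 3).dist 0 2 ≠ 0 := by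
      rw [SimpleGraph.dist_ne_zero_iff_ne_and_reachable]
      exact ⟨by decide, ⟨SimpleGraph.Walk.cons adj01
        (SimpleGraph.Walk.cons adj12 SimpleGraph.Walk.nil)⟩⟩
    omega
  have h02 : f 0 ≠ f 2 := hdistP 0 2 hdist
  obtain ⟨yf, hgy, hy0, hy2⟩ := exists_y ⟨f 0, by have := hbP 0; omega⟩
    ⟨f 1, by have := hbP 1; omega⟩ ⟨f 2, by have := hbP 2; omega⟩
  set yv := yf.val with hyv
  have hy7 : yv < 7 := yf.isLt
  have hC := master (l % 3) (by omega) yv hy7 (f 1) (by have := hbP 1; omega) hgy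
  set c0 := (tbl (l % 3) yv (f 1)).1 with hc0
  set b1 := (tbl (l % 3) yv (f 1)).2.1 with hb1
  set b2 := (tbl (l % 3) yv (f 1)).2.2.1 with hb2
  set b3 := (tbl (l % 3) yv (f 1)).2.2.2.1 with hb3
  set c1 := (tbl (l % 3) yv (f 1)).2.2.2.2 with hc1
  exact ⟨Sum.elim (fun p : Fin l => gf l c0 yv b1 b2 b3 c1 (p:ℕ)) f,
    kLab hl f hC hbP h01g h12g h02 hgy hy0 hy2,
    fun j => rfl,
    cycLab hl hC,
    fun D hD => extension hl hC D hD⟩
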